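/- arXiv:2003.09658 — 2 statements merged into one kernel-verified Lean document; each statement's English description precedes it below -/
import Mathlib

section
/- There exist exponents l_1, …, l_n ≥ 0 such that the coefficient of the monomial ∏_{j=1}^{n} v_j^{l_j} in the Fermat reduction P' of P is a nonzero polynomial in Z_p[e_1, …, e_m]; equivalently, P' is not the zero polynomial, i.e., there is a point (γ_{v_1}, …, γ_{v_n}, γ_{e_1}, …, γ_{e_m}) ∈ Z_p^{n+m} at which P does not vanish. -/
/-!
`P` does not vanish at the point where the vertex variables carry a proper colouring of `G` by
`1, …, Δ + 1` (which exists greedily) and all edge variables are `0`: every factor `v_i - v_j`,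
`v_i - e_j`, `v_i - l` with `Δ + 2 ≤ l ≤ p` is then nonzero, because `Δ + 1 < p`. Fermat reduction
does not change values on `Z_p`, so `P' ≠ 0`, and some vertex monomial has a nonzero coefficient.
-/

open MvPolynomial
open scoped Classical

noncomputable section

/-- Exponent reduction implementing Fermat's relation `x^p ≡ x`:
`0 ↦ 0` and `k ↦ ((k-1) mod (p-1)) + 1` for `k ≥ 1`. -/
def fermatExp (p k : ℕ) : ℕ := if k = 0 then 0 else (k - 1) % (p - 1) + 1

lemma fermatExp_zero (p : ℕ) : fermatExp p 0 = 0 := by simp [fermatExp]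

/-- The Fermat reduction `F'` of a multivariate polynomial over `Z_p`: every exponent is
reduced using `x^p ≡ x`, so that the result has degree `≤ p-1` in each variable. -/
def fermatReduce {σ : Type*} (p : ℕ) (F : MvPolynomial σ (ZMod p)) : MvPolynomial σ (ZMod p) :=
  F.support.sum fun d => monomial (d.mapRange (fermatExp p) (fermatExp_zero p)) (F.coeff d)

/-- Univariate Fermat reduction. -/
def fermatReduceUni (p : ℕ) (f : Polynomial (ZMod p)) : Polynomial (ZMod p) :=
  f.support.sum fun k => Polynomial.monomial (fermatExp p k) (f.coeff k)

/-- `N_e(v_i)`: the edges incident to the vertex `i`. -/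
def incidentE {n m : ℕ} (ed : Fin m → Sym2 (Fin n)) (i : Fin n) : Finset (Fin m) :=
  Finset.univ.filter fun k => i ∈ ed k

/-- `N_i(v_i)`: the neighbours of `v_i` other than `v_1, …, v_{i-1}`. -/
def laterNbrs {n m : ℕ} (ed : Fin m → Sym2 (Fin n)) (i : Fin n) : Finset (Fin n) :=
  Finset.univ.filter fun j => (∃ k, ed k = s(i, j)) ∧ ¬ j < i

/-- `N_i(e_i)`: the edges sharing an endpoint with `e_i`, other than `e_1, …, e_{i-1}`. -/
def laterAdjE {n m : ℕ} (ed : Fin m → Sym2 (Fin n)) (k : Fin m) : Finset (Fin m) :=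
  Finset.univ.filter fun l => (l ≠ k ∧ ∃ x, x ∈ ed k ∧ x ∈ ed l) ∧ ¬ l < k

/-- The polynomial `P` (vertex variables are `Sum.inl`, edge variables are `Sum.inr`). -/
def Ppoly (n m Δ p : ℕ) (ed : Fin m → Sym2 (Fin n)) : MvPolynomial (Fin n ⊕ Fin m) (ZMod p) :=
  ∏ i : Fin n,
    ((∏ j ∈ laterNbrs ed i, (X (Sum.inl i) - X (Sum.inl j))) *
      (∏ k ∈ incidentE ed i, (X (Sum.inl i) - X (Sum.inr k))) *
      (∏ l ∈ Finset.Icc (Δ + 2) p, (X (Sum.inl i) - C (l : ZMod p))))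

/-- The coefficient of the vertex-monomial `∏ v_j ^ (d j)` of `F`, as a polynomial in the
edge variables. -/
def vCoeff {n m p : ℕ} (F : MvPolynomial (Fin n ⊕ Fin m) (ZMod p)) (d : Fin n →₀ ℕ) :
    MvPolynomial (Fin m) (ZMod p) :=
  ((sumAlgEquiv (ZMod p) (Fin n) (Fin m)) F).coeff d

/-- The colour set `K = {1, …, Δ+1} ∪ {α} ⊆ Z_p`. -/
def colorSet (Δ p : ℕ) (α : ZMod p) : Finset (ZMod p) :=
  insert α ((Finset.Icc 1 (Δ + 1)).image fun l : ℕ => (l : ZMod p))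

/-- The polynomial `E^k`. -/
def Epoly {n m : ℕ} (Δ p : ℕ) [NeZero p] (ed : Fin m → Sym2 (Fin n)) (α : ZMod p) (k : Fin m) :
    MvPolynomial (Fin m) (ZMod p) :=
  (∏ l ∈ laterAdjE ed k, (X k - X l)) *
    (∏ c ∈ Finset.univ \ colorSet Δ p α, (X k - C c))

/-- `Q_i = C^{P'} · E^1 ⋯ E^i`; here `i` is the number of edge factors, so `Qpoly … i`
is the paper's `Q_i` (and `Qpoly … 0 = C^{P'}`). -/
def Qpoly {n m : ℕ} (Δ p : ℕ) [NeZero p] (ed : Fin m → Sym2 (Fin n)) (α : ZMod p)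
    (CP : MvPolynomial (Fin m) (ZMod p)) (i : ℕ) : MvPolynomial (Fin m) (ZMod p) :=
  CP * ∏ k ∈ Finset.univ.filter (fun k : Fin m => (k : ℕ) < i), Epoly Δ p ed α k

/-- Fermat reduction in all variables except the variable `j`. -/
def fermatReduceExcept {m : ℕ} (p : ℕ) (j : Fin m) (F : MvPolynomial (Fin m) (ZMod p)) :
    MvPolynomial (Fin m) (ZMod p) :=
  F.support.sum fun d =>
    monomial (Finsupp.filter (fun k => k = j) d +
      Finsupp.mapRange (fermatExp p) (fermatExp_zero p) (Finsupp.filter (fun k => k ≠ j) d))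
      (F.coeff d)

/-- Given an exponent vector `d0` for the variables other than `j`, the coefficient in `F` of the
monomial `∏_{k ≠ j} X_k ^ (d0 k)`, as a univariate polynomial in the variable `j`. -/
def coeffAt {m p : ℕ} (j : Fin m) (d0 : Fin m →₀ ℕ) (F : MvPolynomial (Fin m) (ZMod p)) :
    Polynomial (ZMod p) :=
  (F.support.filter fun d => ∀ k, k ≠ j → d k = d0 k).sum fun d =>
    Polynomial.monomial (d j) (F.coeff d)

lemma pow_fermatExp {p : ℕ} [Fact p.Prime] (x : ZMod p) (k : ℕ) :
    x ^ fermatExp p k = x ^ k := by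
  unfold fermatExp
  split_ifs with hk
  · rw [hk]
  obtain rfl | hx := eq_or_ne x 0
  · rw [zero_pow (Nat.succ_ne_zero _), zero_pow hk]
  have hk_eq : k = (p - 1) * ((k - 1) / (p - 1)) + ((k - 1) % (p - 1) + 1) := by
    have := Nat.div_add_mod (k - 1) (p - 1)
    omega
  conv_rhs => rw [hk_eq, pow_add, pow_mul, ZMod.pow_card_sub_one_eq_one hx, one_pow, one_mul]

lemma eval_fermatReduce {σ : Type*} {p : ℕ} [Fact p.Prime] (F : MvPolynomial σ (ZMod p))
    (γ : σ → ZMod p) : eval γ (fermatReduce p F) = eval γ F := by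
  conv_rhs => rw [← support_sum_monomial_coeff F]
  rw [fermatReduce, map_sum, map_sum]
  refine Finset.sum_congr rfl fun d _ => ?_
  rw [eval_monomial, eval_monomial, Finsupp.prod_mapRange_index fun i => pow_zero _]
  exact congrArg _ (Finsupp.prod_congr fun i _ => pow_fermatExp _ _)

lemma exists_vCoeff_ne_zero {n m p : ℕ} {F : MvPolynomial (Fin n ⊕ Fin m) (ZMod p)}
    (hF : F ≠ 0) : ∃ d, vCoeff F d ≠ 0 :=
  ne_zero_iff.mp ((map_ne_zero_iff _ (sumAlgEquiv _ _ _).injective).mpr hF)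

lemma natCast_ne_natCast_of_lt_of_le {p a l : ℕ} (ha : 0 < a) (hal : a < l) (hlp : l ≤ p) :
    (a : ZMod p) ≠ l := by
  intro h
  have hdvd := (Nat.modEq_iff_dvd' hal.le).1 ((CharP.natCast_eq_natCast (ZMod p) p).1 h)
  have := Nat.le_of_dvd (by omega) hdvd
  omega

/-- Greedy colouring: a vertex always sees at most `Δ` colours on its neighbours. -/
theorem SimpleGraph.colorable_succ_of_forall_degree_le {V : Type*} [Fintype V]
    (G : SimpleGraph V) [DecidableRel G.Adj] {Δ : ℕ} (hΔ : ∀ v, G.degree v ≤ Δ) :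
    G.Colorable (Δ + 1) := by
  suffices ∀ s : Finset V, ∃ c : V → Fin (Δ + 1), ∀ v ∈ s, ∀ w ∈ s, G.Adj v w → c v ≠ c w by
    obtain ⟨c, hc⟩ := this Finset.univ
    exact ⟨Coloring.mk c fun hvw => hc _ (Finset.mem_univ _) _ (Finset.mem_univ _) hvw⟩
  classical
  intro s
  induction s using Finset.induction_on with
  | empty => exact ⟨0, by simp⟩
  | insert v s hv ih =>
    obtain ⟨c, hc⟩ := ih
    obtain ⟨a, ha⟩ : ((G.neighborFinset v).image c)ᶜ.Nonempty := by
      rw [← Finset.card_pos, Finset.card_compl, Fintype.card_fin]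
      have : ((G.neighborFinset v).image c).card ≤ Δ :=
        Finset.card_image_le.trans ((G.card_neighborFinset_eq_degree v).trans_le (hΔ v))
      omega
    have hfresh : ∀ w, G.Adj v w → a ≠ c w := fun w hvw haw =>
      Finset.mem_compl.1 ha (Finset.mem_image.2 ⟨w, (G.mem_neighborFinset v w).2 hvw, haw.symm⟩)
    refine ⟨Function.update c v a, fun x hx y hy hxy => ?_⟩
    rw [Finset.mem_insert] at hx hy
    obtain rfl | hxv := eq_or_ne x v
    · rw [Function.update_self, Function.update_of_ne hxy.ne.symm]
      exact hfresh y hxy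
    obtain rfl | hyv := eq_or_ne y v
    · rw [Function.update_self, Function.update_of_ne hxv]
      exact (hfresh x hxy.symm).symm
    rw [Function.update_of_ne hxv, Function.update_of_ne hyv]
    exact hc x (hx.resolve_left hxv) y (hy.resolve_left hyv) hxy

def graphOfEdges {n m : ℕ} (ed : Fin m → Sym2 (Fin n)) : SimpleGraph (Fin n) :=
  SimpleGraph.fromEdgeSet (Set.range ed)

lemma graphOfEdges_adj {n m : ℕ} {ed : Fin m → Sym2 (Fin n)} {i j : Fin n} :
    (graphOfEdges ed).Adj i j ↔ (∃ k, ed k = s(i, j)) ∧ i ≠ j := by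
  simp [graphOfEdges]

lemma degree_graphOfEdges_le {n m : ℕ} (ed : Fin m → Sym2 (Fin n)) (i : Fin n) :
    (graphOfEdges ed).degree i ≤ (incidentE ed i).card := by
  rw [← SimpleGraph.card_neighborFinset_eq_degree]
  refine Finset.card_le_card_of_forall_subsingleton (fun j k => ed k = s(i, j)) ?_ ?_
  · intro j hj
    obtain ⟨⟨k, hk⟩, -⟩ := graphOfEdges_adj.1 ((SimpleGraph.mem_neighborFinset _ _ _).1 hj)
    exact ⟨k, by simp [incidentE, hk], hk⟩
  · intro k _ j hj j' hj'
    exact Sym2.congr_right.1 (hj.2.symm.trans hj'.2)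

lemma eval_Ppoly_ne_zero {n m Δ p : ℕ} [Fact p.Prime] {ed : Fin m → Sym2 (Fin n)}
    (hsimple : ∀ k, ¬ (ed k).IsDiag) (γ : Fin n ⊕ Fin m → ZMod p)
    (hadj : ∀ i j, (graphOfEdges ed).Adj i j → γ (Sum.inl i) ≠ γ (Sum.inl j))
    (hedge : ∀ i k, γ (Sum.inl i) ≠ γ (Sum.inr k))
    (hcol : ∀ i, ∀ l ∈ Finset.Icc (Δ + 2) p, γ (Sum.inl i) ≠ l) :
    eval γ (Ppoly n m Δ p ed) ≠ 0 := by
  rw [Ppoly, map_prod, Finset.prod_ne_zero_iff]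
  intro i _
  simp only [map_mul, map_prod, map_sub, eval_X, eval_C]
  refine mul_ne_zero (mul_ne_zero ?_ ?_) ?_
  · rw [Finset.prod_ne_zero_iff]
    intro j hj
    obtain ⟨⟨k, hk⟩, -⟩ := (Finset.mem_filter.1 hj).2
    refine sub_ne_zero.2 (hadj i j (graphOfEdges_adj.2 ⟨⟨k, hk⟩, ?_⟩))
    rintro rfl
    exact hsimple k (hk ▸ Sym2.mk_isDiag_iff.2 rfl)
  · exact Finset.prod_ne_zero_iff.2 fun k _ => sub_ne_zero.2 (hedge i k)
  · exact Finset.prod_ne_zero_iff.2 fun l hl => sub_ne_zero.2 (hcol i l hl)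

theorem statement0_general (n m Δ p : ℕ) [Fact p.Prime]
    (hm : 1 ≤ m) (hp : m ^ 2 * (2 * Δ + 2) ≤ p)
    (ed : Fin m → Sym2 (Fin n))
    (hsimple : ∀ k, ¬ (ed k).IsDiag)
    (hΔ : ∀ i, (incidentE ed i).card ≤ Δ) :
    (∃ d : Fin n →₀ ℕ, vCoeff (fermatReduce p (Ppoly n m Δ p ed)) d ≠ 0) ∧
      ∃ γ : Fin n ⊕ Fin m → ZMod p, eval γ (Ppoly n m Δ p ed) ≠ 0 := by
  have hΔp : Δ + 1 < p :=
    calc Δ + 1 < 2 * Δ + 2 := by omega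
      _ ≤ m ^ 2 * (2 * Δ + 2) := Nat.le_mul_of_pos_left _ (pow_pos hm 2)
      _ ≤ p := hp
  obtain ⟨c⟩ := (graphOfEdges ed).colorable_succ_of_forall_degree_le fun i =>
    (degree_graphOfEdges_le ed i).trans (hΔ i)
  let γ : Fin n ⊕ Fin m → ZMod p := Sum.elim (fun i => ((c i + 1 : ℕ) : ZMod p)) 0
  have hcol : ∀ i, ∀ l ∈ Finset.Icc (Δ + 2) p, γ (Sum.inl i) ≠ l := fun i l hl =>
    natCast_ne_natCast_of_lt_of_le (by omega)
      (by have := (c i).isLt; have := (Finset.mem_Icc.1 hl).1; omega) (Finset.mem_Icc.1 hl).2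
  have hP : eval γ (Ppoly n m Δ p ed) ≠ 0 := by
    refine eval_Ppoly_ne_zero hsimple γ (fun i j hij h => c.valid hij ?_) (fun i k => ?_) hcol
    · have hlt : ∀ v, c v + 1 < p := fun v => by have := (c v).isLt; omega
      exact Fin.ext (by simpa using CharP.natCast_injOn_Iio (ZMod p) p (hlt i) (hlt j) h)
    · -- the edge value `0` is the excluded colour `l = p`
      simpa [γ, ZMod.natCast_self] using hcol i p (Finset.mem_Icc.2 ⟨by omega, le_rfl⟩)
  refine ⟨exists_vCoeff_ne_zero fun h => hP ?_, γ, hP⟩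
  rw [← eval_fermatReduce, h, map_zero]

/-- Theorem 3.1 of the paper. There are exponents `l_1, …, l_n ≥ 0` (packaged
as `d : Fin n →₀ ℕ`) such that the coefficient of `∏ v_j ^ (d j)` in the Fermat reduction `P'`
of `P` is a nonzero polynomial in the edge variables; equivalently, there is a point of
`Z_p^{n+m}` at which `P` does not vanish. -/
theorem statement0 (n m Δ p : ℕ) [Fact p.Prime]
    (hm : 1 ≤ m) (hp : m ^ 2 * (2 * Δ + 2) ≤ p)
    (ed : Fin m → Sym2 (Fin n)) (hinj : Function.Injective ed)
    (hsimple : ∀ k, ¬ (ed k).IsDiag)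
    (hΔ : ∀ i, (incidentE ed i).card ≤ Δ)
    (hΔmax : ∃ i, (incidentE ed i).card = Δ) :
    (∃ d : Fin n →₀ ℕ, vCoeff (fermatReduce p (Ppoly n m Δ p ed)) d ≠ 0) ∧
      ∃ γ : Fin n ⊕ Fin m → ZMod p, eval γ (Ppoly n m Δ p ed) ≠ 0 :=
  statement0_general n m Δ p hm hp ed hsimple hΔ

end
end

section
/- For every 1 ≤ i ≤ m, the Fermat reduction of Z_i is not the zero polynomial; equivalently, Z_i does not vanish at every point of Z_p^m. -/
open MvPolynomial
open scoped Classical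

noncomputable section

/-!
Each edge variable `e_k` occurs in exactly the two factors `v_s - e_k`, `v_t - e_k` of `P`, and
taking the Fermat reduction or a coefficient in the vertex variables does not raise its degree,
so `C^{P'}` has degree at most `2` in every `e_k`. The Vandermonde-type factor of `Z_i` has degree
at most `|S_i| - 1 ≤ Δ - 1` in each variable and the last factor degree `p - Δ - 2` in the
variables of `S_i` only. Hence `Z_i` is a product of nonzero polynomials with degree at most
`p - 1` in each variable, and a nonzero polynomial over `Z_p` of such degrees cannot vanish on
all of `Z_p^m`.
-/

open Finset

theorem Finset.card_lt_pairs_containing_le {α : Type*} [LinearOrder α] (S : Finset α) (k : α) :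
    #((S ×ˢ S).filter fun q => q.1 < q.2 ∧ (k = q.1 ∨ k = q.2)) ≤ #S - 1 := by
  by_cases hk : k ∈ S
  · rw [← card_erase_of_mem hk]
    refine (card_le_card fun q hq => ?_).trans (card_image_le (f := fun b => (min k b, max k b)))
    simp only [mem_filter, mem_product] at hq
    simp only [mem_image, mem_erase]
    rcases hq with ⟨⟨ha, hb⟩, hlt, rfl | rfl⟩
    · exact ⟨q.2, ⟨hlt.ne', hb⟩, by simp [hlt.le]⟩
    · exact ⟨q.1, ⟨hlt.ne, ha⟩, by simp [hlt.le]⟩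
  · rw [card_eq_zero.mpr (filter_false_of_mem fun q hq => ?_)]
    · exact Nat.zero_le _
    · rintro ⟨-, rfl | rfl⟩ <;> simp_all

theorem Sym2.card_filter_mem_le_two {α : Type*} [Fintype α] [DecidableEq α] (z : Sym2 α) :
    #(univ.filter (· ∈ z)) ≤ 2 := by
  induction z using Sym2.ind with
  | h x y =>
    exact (card_le_card fun v hv => by simpa using hv).trans (card_le_two (a := x) (b := y))

namespace MvPolynomial

variable {σ R : Type*} [CommRing R]

theorem sumAlgEquiv_monomial {S₁ S₂ : Type*} (u : S₁ ⊕ S₂ →₀ ℕ) (a : R) :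
    sumAlgEquiv R S₁ S₂ (monomial u a) =
      monomial (Finsupp.sumFinsuppAddEquivProdFinsupp u).1
        (monomial (Finsupp.sumFinsuppAddEquivProdFinsupp u).2 a) := by
  simp [sumAlgEquiv, monomial]

theorem coeff_coeff_sumAlgEquiv {S₁ S₂ : Type*} (F : MvPolynomial (S₁ ⊕ S₂) R)
    (d : S₁ →₀ ℕ) (e : S₂ →₀ ℕ) :
    ((sumAlgEquiv R S₁ S₂ F).coeff d).coeff e = F.coeff (d.sumElim e) := by
  classical
  induction F using MvPolynomial.induction_on' with
  | monomial u a =>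
    have hu : u = d.sumElim e ↔ Finsupp.sumFinsuppAddEquivProdFinsupp u = (d, e) := by
      rw [← Finsupp.sumFinsuppAddEquivProdFinsupp.eq_symm_apply]
      rfl
    rw [sumAlgEquiv_monomial, coeff_monomial, coeff_monomial]
    simp only [hu, Prod.ext_iff]
    split_ifs <;> simp_all
  | add f g hf hg => simp only [map_add, coeff_add, hf, hg]

theorem degreeOf_coeff_sumAlgEquiv_le {S₁ S₂ : Type*} (F : MvPolynomial (S₁ ⊕ S₂) R)
    (d : S₁ →₀ ℕ) (k : S₂) :
    degreeOf k ((sumAlgEquiv R S₁ S₂ F).coeff d) ≤ degreeOf (Sum.inr k) F :=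
  degreeOf_le_iff.mpr fun e he => by
    rw [mem_support_iff, coeff_coeff_sumAlgEquiv] at he
    simpa using monomial_le_degreeOf (Sum.inr k) (mem_support_iff.mpr he)

theorem degreeOf_X_le [DecidableEq σ] (n a : σ) :
    degreeOf n (X a : MvPolynomial σ R) ≤ if n = a then 1 else 0 :=
  degreeOf_le_iff.mpr fun d hd => by
    rw [mem_singleton.mp (support_monomial_subset hd)]
    by_cases h : n = a <;> simp [h]

theorem degreeOf_X_sub_X_le [DecidableEq σ] (n a b : σ) :
    degreeOf n (X a - X b : MvPolynomial σ R) ≤ if n = a ∨ n = b then 1 else 0 := by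
  refine (degreeOf_sub_le n _ _).trans (max_le ((degreeOf_X_le n a).trans ?_)
    ((degreeOf_X_le n b).trans ?_)) <;> split_ifs <;> simp_all

theorem degreeOf_X_sub_C_le [DecidableEq σ] (n a : σ) (c : R) :
    degreeOf n (X a - C c : MvPolynomial σ R) ≤ if n = a then 1 else 0 :=
  (degreeOf_sub_le n _ _).trans (by simpa using degreeOf_X_le n a)

theorem degreeOf_prod_le_card_filter {ι : Type*} (s : Finset ι) (f : ι → MvPolynomial σ R)
    (n : σ) (P : ι → Prop) [DecidablePred P]
    (h : ∀ j ∈ s, degreeOf n (f j) ≤ if P j then 1 else 0) :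
    degreeOf n (∏ j ∈ s, f j) ≤ #(s.filter P) := by
  rw [card_filter]
  exact (degreeOf_prod_le n s f).trans (sum_le_sum h)

theorem degreeOf_prod_prod_X_sub_X_le [LinearOrder σ] (S : Finset σ) (k : σ) :
    degreeOf k
      (∏ a ∈ S, ∏ b ∈ S.filter (fun b => a < b), (X a - X b : MvPolynomial σ R)) ≤ #S - 1 := by
  rw [← prod_finset_product ((S ×ˢ S).filter fun q => q.1 < q.2) S (fun a => S.filter (a < ·))
    (fun q => by simp [and_assoc]) (f := fun q => (X q.1 - X q.2 : MvPolynomial σ R))]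
  refine (degreeOf_prod_le_card_filter ((S ×ˢ S).filter fun q => q.1 < q.2)
    (fun q => (X q.1 - X q.2 : MvPolynomial σ R)) k (fun q => k = q.1 ∨ k = q.2)
    fun q _ => degreeOf_X_sub_X_le k q.1 q.2).trans ?_
  rw [filter_filter]
  exact S.card_lt_pairs_containing_le k

theorem degreeOf_prod_prod_X_sub_C_le [DecidableEq σ] {ι : Type*}
    (S : Finset σ) (T : Finset ι) (c : ι → R) (k : σ) :
    degreeOf k (∏ a ∈ S, ∏ l ∈ T, (X a - C (c l) : MvPolynomial σ R)) ≤
      if k ∈ S then #T else 0 := by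
  rw [← prod_product' (f := fun a l => (X a - C (c l) : MvPolynomial σ R))]
  refine (degreeOf_prod_le_card_filter (S ×ˢ T)
    (fun q => (X q.1 - C (c q.2) : MvPolynomial σ R)) k (fun q => k = q.1)
    fun q _ => degreeOf_X_sub_C_le k q.1 (c q.2)).trans_eq ?_
  rw [filter_product_left (fun a => k = a), card_product, filter_eq]
  split_ifs <;> simp

theorem X_sub_C_ne_zero [Nontrivial R] (a : σ) (c : R) : (X a - C c : MvPolynomial σ R) ≠ 0 :=
  fun h => by simpa using congrArg (eval fun _ => c + 1) h

theorem prod_prod_X_sub_X_ne_zero [IsDomain R] [LinearOrder σ] (S : Finset σ) :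
    ∏ a ∈ S, ∏ b ∈ S.filter (fun b => a < b), (X a - X b : MvPolynomial σ R) ≠ 0 :=
  prod_ne_zero_iff.mpr fun _ _ => prod_ne_zero_iff.mpr fun _ hb =>
    sub_ne_zero.mpr <| X_injective.ne (mem_filter.mp hb).2.ne

theorem prod_prod_X_sub_C_ne_zero [IsDomain R] {ι : Type*} (S : Finset σ) (T : Finset ι)
    (c : ι → R) : ∏ a ∈ S, ∏ l ∈ T, (X a - C (c l) : MvPolynomial σ R) ≠ 0 :=
  prod_ne_zero_iff.mpr fun a _ => prod_ne_zero_iff.mpr fun l _ => X_sub_C_ne_zero a (c l)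

theorem exists_eval_ne_zero_of_degreeOf_lt {K : Type*} [Field K] [Fintype K] [Finite σ]
    {f : MvPolynomial σ K} (hf : f ≠ 0) (hdeg : ∀ i, degreeOf i f < Fintype.card K) :
    ∃ x, eval x f ≠ 0 := by
  by_contra! h
  exact hf <| eq_zero_of_eval_zero_at_prod_finset f (fun _ => univ) hdeg fun x _ => h x

end MvPolynomial

theorem fermatExp_le (p k : ℕ) : fermatExp p k ≤ k := by
  unfold fermatExp
  split_ifs
  · omega
  · have := Nat.mod_le (k - 1) (p - 1)
    omega

theorem degreeOf_fermatReduce_le {σ : Type*} (p : ℕ) (F : MvPolynomial σ (ZMod p)) (i : σ) :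
    degreeOf i (fermatReduce p F) ≤ degreeOf i F := by
  classical
  refine degreeOf_le_iff.mpr fun e he => ?_
  obtain ⟨u, hu, he⟩ := mem_biUnion.mp (support_sum he)
  rw [mem_singleton.mp (support_monomial_subset he), Finsupp.mapRange_apply]
  exact (fermatExp_le p (u i)).trans (monomial_le_degreeOf i hu)

theorem degreeOf_Ppoly_le (n m Δ p : ℕ) (ed : Fin m → Sym2 (Fin n)) (k : Fin m) :
    degreeOf (Sum.inr k) (Ppoly n m Δ p ed) ≤ 2 := by
  refine (degreeOf_prod_le_card_filter _ _ _ (· ∈ ed k) fun i _ => ?_).trans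
    (Sym2.card_filter_mem_le_two (ed k))
  have hvert := degreeOf_prod_le_card_filter (laterNbrs ed i)
    (fun j => (X (Sum.inl i) - X (Sum.inl j) : MvPolynomial (Fin n ⊕ Fin m) (ZMod p)))
    (Sum.inr k) (fun _ => False) fun j _ => (degreeOf_X_sub_X_le _ _ _).trans_eq (by simp)
  have hedge := degreeOf_prod_le_card_filter (incidentE ed i)
    (fun k' => (X (Sum.inl i) - X (Sum.inr k') : MvPolynomial (Fin n ⊕ Fin m) (ZMod p)))
    (Sum.inr k) (· = k) fun k' _ => (degreeOf_X_sub_X_le _ _ _).trans_eq (by simp [eq_comm])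
  have hconst := degreeOf_prod_le_card_filter (Icc (Δ + 2) p)
    (fun l => (X (Sum.inl i) - C (l : ZMod p) : MvPolynomial (Fin n ⊕ Fin m) (ZMod p)))
    (Sum.inr k) (fun _ => False) fun l _ => (degreeOf_X_sub_C_le _ _ _).trans_eq (by simp)
  have hmem : k ∈ incidentE ed i ↔ i ∈ ed k := by simp [incidentE]
  simp only [filter_false, card_empty, filter_eq', hmem] at hvert hedge hconst
  refine (degreeOf_mul_le _ _ _).trans <| (add_le_add (degreeOf_mul_le _ _ _) hconst).trans ?_
  split_ifs at hedge ⊢ <;> simp at hedge <;> omega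

theorem statement2_general (n m Δ p : ℕ) [Fact p.Prime]
    (hp : m ^ 2 * (2 * Δ + 2) ≤ p)
    (ed : Fin m → Sym2 (Fin n))
    (hΔ : ∀ i, (incidentE ed i).card ≤ Δ)
    (d : Fin n →₀ ℕ) (CP : MvPolynomial (Fin m) (ZMod p))
    (hCP : CP = vCoeff (fermatReduce p (Ppoly n m Δ p ed)) d) (hCP0 : CP ≠ 0)
    (i : Fin m) (s : Fin n) :
    ∃ γ : Fin m → ZMod p,
      eval γ (CP *
        (∏ a ∈ incidentE ed s, ∏ b ∈ (incidentE ed s).filter (fun b => a < b), (X a - X b)) *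
        ∏ a ∈ incidentE ed s, ∏ l ∈ Finset.Icc (Δ + 3) p, (X a - C (l : ZMod p))) ≠ 0 := by
  have hpΔ : 2 * Δ + 2 ≤ p := (Nat.le_mul_of_pos_left _ (pow_pos i.pos 2)).trans hp
  have hΔpos : 0 < Δ := (card_pos.mpr ⟨i, (mem_filter_univ _).mpr (ed i).out_fst_mem⟩).trans_le
    (hΔ (ed i).out.1)
  have hS : #(incidentE ed s) ≤ Δ := hΔ s
  refine exists_eval_ne_zero_of_degreeOf_lt (mul_ne_zero (mul_ne_zero hCP0
    (prod_prod_X_sub_X_ne_zero _)) (prod_prod_X_sub_C_ne_zero _ _ _)) fun j => ?_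
  have hCP2 : degreeOf j CP ≤ 2 := hCP ▸ (degreeOf_coeff_sumAlgEquiv_le _ d j).trans
    ((degreeOf_fermatReduce_le p _ _).trans (degreeOf_Ppoly_le n m Δ p ed j))
  have hV := degreeOf_prod_prod_X_sub_X_le (R := ZMod p) (incidentE ed s) j
  have hL := degreeOf_prod_prod_X_sub_C_le (incidentE ed s) (Icc (Δ + 3) p)
    (fun l => (l : ZMod p)) j
  rw [ZMod.card]
  refine ((degreeOf_mul_le _ _ _).trans (add_le_add (degreeOf_mul_le _ _ _) hL)).trans_lt ?_
  rw [Nat.card_Icc]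
  split_ifs <;> omega

/-- Remark 3.3 of the paper. For every edge `e_i = {v_s, v_t}` (labelled so
that `|N(v_s)| ≥ |N(v_t)|`), with `S_i = N_e(v_s)`, the polynomial
`Z_i = C^{P'}(e) · ∏_{j<k} (e_{l_j} - e_{l_k}) · ∏_{j} ∏_{l=Δ+3}^{p} (e_{l_j} - l)`
does not vanish at every point of `Z_p^m` (equivalently, its Fermat reduction is nonzero). -/
theorem statement2 (n m Δ p : ℕ) [Fact p.Prime]
    (hm : 1 ≤ m) (hp : m ^ 2 * (2 * Δ + 2) ≤ p)
    (ed : Fin m → Sym2 (Fin n)) (hinj : Function.Injective ed)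
    (hsimple : ∀ k, ¬ (ed k).IsDiag)
    (hΔ : ∀ i, (incidentE ed i).card ≤ Δ)
    (hΔmax : ∃ i, (incidentE ed i).card = Δ)
    (d : Fin n →₀ ℕ) (CP : MvPolynomial (Fin m) (ZMod p))
    (hCP : CP = vCoeff (fermatReduce p (Ppoly n m Δ p ed)) d) (hCP0 : CP ≠ 0)
    (i : Fin m) (s t : Fin n) (hi : ed i = s(s, t))
    (hst : (incidentE ed t).card ≤ (incidentE ed s).card) :
    ∃ γ : Fin m → ZMod p,
      eval γ (CP *
        (∏ a ∈ incidentE ed s, ∏ b ∈ (incidentE ed s).filter (fun b => a < b), (X a - X b)) *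
        ∏ a ∈ incidentE ed s, ∏ l ∈ Finset.Icc (Δ + 3) p, (X a - C (l : ZMod p))) ≠ 0 :=
  statement2_general n m Δ p hp ed hΔ d CP hCP hCP0 i s
end
end
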